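/- Let B be a unital ℂ-algebra and φ : B → ℂ a unital linear functional. Then for every t ≥ 0, every n ≥ 1, and all f₁,…,fₙ ∈ B°, the conditionally free cumulants with respect to the pair (Φ_t, Ψ_t) on the tensor algebra T(B°) satisfy R^{(Φ_t,Ψ_t)}_n(X(f₁),…,X(fₙ)) = (1+t)·B^φ_n(f₁,…,fₙ). -/

import Mathlib

open scoped Classical

noncomputable section

variable {B : Type*} [Ring B] [Algebra ℂ B]

/-- The iterated map `Λ(g₁, Λ(g₂, …))`, where `Λ(f,g) = fg - φ(fg)·1`. -/
def LamChain (φ : B →ₗ[ℂ] ℂ) : List B → B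
  | [] => 1
  | [g] => g
  | g :: h :: rest =>
      g * LamChain φ (h :: rest) - φ (g * LamChain φ (h :: rest)) • (1 : B)

/-- `W(g₁,…,g_k) = g₁·Λ(g₂, Λ(g₃, …, Λ(g_{k-1}, g_k)…))`. -/
def Wof (φ : B →ₗ[ℂ] ℂ) : List B → B
  | [] => 1
  | g :: rest => g * LamChain φ rest

/-- `i` and `j` lie in a common block of `P`. -/
def sameBlock {n : ℕ} (P : Finset (Finset (Fin n))) (i j : Fin n) : Prop :=
  ∃ V ∈ P, i ∈ V ∧ j ∈ V

/-- `P` is a set partition of `{0,…,n-1}`. -/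
def IsPartition {n : ℕ} (P : Finset (Finset (Fin n))) : Prop :=
  (∀ V ∈ P, V.Nonempty) ∧ ∀ i : Fin n, ∃! V, V ∈ P ∧ i ∈ V

/-- `P` is a noncrossing partition. -/
def IsNC {n : ℕ} (P : Finset (Finset (Fin n))) : Prop :=
  IsPartition P ∧ ∀ i j k l : Fin n, i < j → j < k → k < l →
    sameBlock P i k → sameBlock P j l → sameBlock P i j

/-- `P` is an interval partition: blocks are sets of consecutive integers. -/
def IsIntervalPartition {n : ℕ} (P : Finset (Finset (Fin n))) : Prop :=
  IsPartition P ∧ ∀ i j k : Fin n, i < j → j < k → sameBlock P i k → sameBlock P i j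

/-- `V` is an inner block of `P`. -/
def IsInnerBlock {n : ℕ} (P : Finset (Finset (Fin n))) (V : Finset (Fin n)) : Prop :=
  ∃ W ∈ P, W ≠ V ∧ ∃ j ∈ V, ∃ i ∈ W, ∃ k ∈ W, i < j ∧ j < k

/-- Noncrossing partitions of `{0,…,n-1}`. -/
def NCSet (n : ℕ) : Finset (Finset (Finset (Fin n))) :=
  Finset.univ.filter fun P => IsNC P

/-- Noncrossing partitions with no singleton blocks. -/
def NCnsSet (n : ℕ) : Finset (Finset (Finset (Fin n))) :=
  Finset.univ.filter fun P => IsNC P ∧ ∀ V ∈ P, 2 ≤ V.card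

/-- Interval partitions of `{0,…,n-1}`. -/
def IntervalSet (n : ℕ) : Finset (Finset (Finset (Fin n))) :=
  Finset.univ.filter fun P => IsIntervalPartition P

/-- Irreducible noncrossing partitions: exactly one outer block. -/
def NCirrSet (n : ℕ) : Finset (Finset (Finset (Fin n))) :=
  Finset.univ.filter fun P => IsNC P ∧ (P.filter fun V => ¬ IsInnerBlock P V).card = 1

/-- The tuple of entries of `a` indexed by `V`, in increasing order of index. -/
def blockList {n : ℕ} {A : Type*} (a : Fin n → A) (V : Finset (Fin n)) : List A :=
  (V.sort (· ≤ ·)).map a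

/-- `W(V)` from the paper. -/
def Wblock {n : ℕ} (φ : B →ₗ[ℂ] ℂ) (f : Fin n → B) (V : Finset (Fin n)) : B :=
  Wof φ (blockList f V)

/-- Number of outer blocks. -/
def outerCount {n : ℕ} (P : Finset (Finset (Fin n))) : ℕ :=
  (P.filter fun V => ¬ IsInnerBlock P V).card

/-- Number of inner blocks. -/
def innerCount {n : ℕ} (P : Finset (Finset (Fin n))) : ℕ :=
  (P.filter fun V => IsInnerBlock P V).card

/-- `R` is the family of free cumulant functionals of `ω` (written on lists):
the moment–cumulant recursion over noncrossing partitions. -/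
def IsFreeCumulant {A : Type*} [Ring A] [Algebra ℂ A] (ω : A →ₗ[ℂ] ℂ)
    (R : List A → ℂ) : Prop :=
  ∀ (n : ℕ), 1 ≤ n → ∀ a : Fin n → A,
    ω (List.ofFn a).prod = ∑ P ∈ NCSet n, ∏ V ∈ P, R (blockList a V)

/-- `Bc` is the family of Boolean cumulant functionals of `ω` (written on lists). -/
def IsBooleanCumulant {A : Type*} [Ring A] [Algebra ℂ A] (ω : A →ₗ[ℂ] ℂ)
    (Bc : List A → ℂ) : Prop :=
  ∀ (n : ℕ), 1 ≤ n → ∀ a : Fin n → A,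
    ω (List.ofFn a).prod = ∑ P ∈ IntervalSet n, ∏ V ∈ P, Bc (blockList a V)

/-- `Rc` is the family of conditionally free cumulant functionals of the pair `(ω, ω')`,
where `Rψ` is the family of free cumulants of `ω'`. -/
def IsCFreeCumulant {A : Type*} [Ring A] [Algebra ℂ A] (ω : A →ₗ[ℂ] ℂ)
    (Rψ Rc : List A → ℂ) : Prop :=
  ∀ (n : ℕ), 1 ≤ n → ∀ a : Fin n → A,
    ω (List.ofFn a).prod = ∑ P ∈ NCSet n,
      (∏ V ∈ P.filter (fun V => IsInnerBlock P V), Rψ (blockList a V)) *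
      (∏ V ∈ P.filter (fun V => ¬ IsInnerBlock P V), Rc (blockList a V))

/-- `Φ` is the state `Φ_t` on the tensor algebra `T(B°)`. -/
def IsPhiT (φ : B →ₗ[ℂ] ℂ) (t : ℝ)
    (Φ : TensorAlgebra ℂ (LinearMap.ker φ) →ₗ[ℂ] ℂ) : Prop :=
  Φ 1 = 1 ∧ ∀ (n : ℕ), 1 ≤ n → ∀ f : Fin n → LinearMap.ker φ,
    Φ (List.ofFn fun i => TensorAlgebra.ι ℂ (f i)).prod
      = ∑ P ∈ NCnsSet n, (1 + (t : ℂ)) ^ outerCount P * (t : ℂ) ^ innerCount P *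
          ∏ V ∈ P, φ (Wblock φ (fun i => (f i : B)) V)

/-- `Ψ` is the state `Ψ_t` on the tensor algebra `T(B°)`. -/
def IsPsiT (φ : B →ₗ[ℂ] ℂ) (t : ℝ)
    (Ψ : TensorAlgebra ℂ (LinearMap.ker φ) →ₗ[ℂ] ℂ) : Prop :=
  Ψ 1 = 1 ∧ ∀ (n : ℕ), 1 ≤ n → ∀ f : Fin n → LinearMap.ker φ,
    Ψ (List.ofFn fun i => TensorAlgebra.ι ℂ (f i)).prod
      = ∑ P ∈ NCnsSet n, (t : ℂ) ^ P.card *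
          ∏ V ∈ P, φ (Wblock φ (fun i => (f i : B)) V)

/-- Free independence of a family of unital subalgebras with respect to `ω`. -/
def FreeIndep {A : Type*} [Ring A] [Algebra ℂ A] (ω : A →ₗ[ℂ] ℂ)
    {k : ℕ} (T : Fin k → Subalgebra ℂ A) : Prop :=
  ∀ (n : ℕ), 1 ≤ n → ∀ u : ℕ → Fin k, (∀ j, j + 1 < n → u j ≠ u (j + 1)) →
    ∀ a : ℕ → A, (∀ j < n, a j ∈ T (u j)) → (∀ j < n, ω (a j) = 0) →
      ω (((List.range n).map a).prod) = 0

end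

section AuxDev
open Finset

/-! ### Sort and blockList plumbing -/

lemma sort_eq_of_sorted {n : ℕ} {s : Finset (Fin n)} {l : List (Fin n)}
    (hs : l.Pairwise (· ≤ ·)) (hnd : l.Nodup) (hmem : ∀ x, x ∈ l ↔ x ∈ s) :
    s.sort (· ≤ ·) = l := by
  apply List.Perm.eq_of_pairwise' (Finset.pairwise_sort _ _) hs
  apply List.perm_of_nodup_nodup_toFinset_eq (Finset.sort_nodup _ _) hnd
  ext x
  simp [List.mem_toFinset, Finset.mem_sort, hmem]

lemma sort_map' {r n : ℕ} (g : Fin r ↪ Fin n) (hg : ∀ a b : Fin r, a ≤ b → g a ≤ g b)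
    (V : Finset (Fin r)) :
    (V.map g).sort (· ≤ ·) = (V.sort (· ≤ ·)).map g := by
  apply sort_eq_of_sorted
  · exact List.Pairwise.map g (fun a b h => hg a b h) (Finset.pairwise_sort _ _)
  · exact (Finset.sort_nodup _ _).map g.injective
  · intro x
    simp only [List.mem_map, Finset.mem_sort, Finset.mem_map]

lemma blockList_eq_ofFn {n : ℕ} {A : Type*} (a : Fin n → A) (V : Finset (Fin n)) :
    blockList a V = List.ofFn (fun i => a ((V.sort (· ≤ ·)).get i)) := by
  unfold blockList
  conv_lhs => rw [← List.ofFn_get (V.sort (· ≤ ·)), List.map_ofFn]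
  rfl

lemma blockList_univ {n : ℕ} {A : Type*} (a : Fin n → A) :
    blockList a Finset.univ = List.ofFn a := by
  unfold blockList
  rw [show ((Finset.univ : Finset (Fin n)).sort (· ≤ ·)) = List.finRange n from Fin.sort_univ n,
    List.ofFn_eq_map]

lemma blockList_singleton {n : ℕ} {A : Type*} (a : Fin n → A) (i : Fin n) :
    blockList a {i} = [a i] := by
  unfold blockList
  rw [Finset.sort_singleton]
  rfl

lemma blockList_length {n : ℕ} {A : Type*} (a : Fin n → A) (V : Finset (Fin n)) :
    (blockList a V).length = V.card := by
  simp [blockList, Finset.length_sort]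

lemma sort_get_mem {n : ℕ} (V : Finset (Fin n)) (i : Fin (V.sort (· ≤ ·)).length) :
    (V.sort (· ≤ ·)).get i ∈ V := by
  rw [← Finset.mem_sort (α := Fin n) (· ≤ ·)]
  exact List.get_mem _ i

end AuxDev

section AuxPart
open Finset

variable {n : ℕ}

lemma block_eq_of_mem {P : Finset (Finset (Fin n))} (hP : IsPartition P)
    {V W : Finset (Fin n)} {i : Fin n} (hV : V ∈ P) (hW : W ∈ P) (hiV : i ∈ V) (hiW : i ∈ W) :
    V = W :=
  ((hP.2 i).unique ⟨hV, hiV⟩ ⟨hW, hiW⟩)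

lemma sameBlock_top (i j : Fin n) : sameBlock ({Finset.univ} : Finset (Finset (Fin n))) i j :=
  ⟨Finset.univ, Finset.mem_singleton_self _, Finset.mem_univ _, Finset.mem_univ _⟩

lemma isPartition_top (hn : 1 ≤ n) : IsPartition ({Finset.univ} : Finset (Finset (Fin n))) := by
  constructor
  · intro V hV
    rw [Finset.mem_singleton] at hV
    exact hV ▸ ⟨⟨0, hn⟩, Finset.mem_univ _⟩
  · intro i
    exact ⟨Finset.univ, ⟨Finset.mem_singleton_self _, Finset.mem_univ _⟩,
      fun V hV => Finset.mem_singleton.mp hV.1⟩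

lemma isNC_top (hn : 1 ≤ n) : IsNC ({Finset.univ} : Finset (Finset (Fin n))) :=
  ⟨isPartition_top hn, fun i j _ _ _ _ _ _ _ => sameBlock_top i j⟩

lemma isInterval_top (hn : 1 ≤ n) :
    IsIntervalPartition ({Finset.univ} : Finset (Finset (Fin n))) :=
  ⟨isPartition_top hn, fun i j _ _ _ _ => sameBlock_top i j⟩

lemma mem_NCSet {P : Finset (Finset (Fin n))} : P ∈ NCSet n ↔ IsNC P := by
  simp [NCSet]

lemma mem_NCnsSet {P : Finset (Finset (Fin n))} :
    P ∈ NCnsSet n ↔ IsNC P ∧ ∀ V ∈ P, 2 ≤ V.card := by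
  simp [NCnsSet]

lemma mem_IntervalSet {P : Finset (Finset (Fin n))} :
    P ∈ IntervalSet n ↔ IsIntervalPartition P := by
  simp [IntervalSet]

lemma top_mem_NCSet (hn : 1 ≤ n) : ({Finset.univ} : Finset (Finset (Fin n))) ∈ NCSet n :=
  mem_NCSet.mpr (isNC_top hn)

lemma top_mem_IntervalSet (hn : 1 ≤ n) :
    ({Finset.univ} : Finset (Finset (Fin n))) ∈ IntervalSet n :=
  mem_IntervalSet.mpr (isInterval_top hn)

lemma eq_top_of_univ_mem {P : Finset (Finset (Fin n))} (hP : IsPartition P)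
    (h : Finset.univ ∈ P) : P = {Finset.univ} := by
  ext W
  rw [Finset.mem_singleton]
  constructor
  · intro hW
    obtain ⟨i, hi⟩ := hP.1 W hW
    exact block_eq_of_mem hP hW h hi (Finset.mem_univ i)
  · rintro rfl; exact h

lemma card_lt_of_ne_top {P : Finset (Finset (Fin n))} (hP : IsPartition P)
    (hne : P ≠ {Finset.univ}) {V : Finset (Fin n)} (hV : V ∈ P) : V.card < n := by
  have hVu : V ≠ Finset.univ := by
    rintro rfl
    exact hne (eq_top_of_univ_mem hP hV)
  have := Finset.card_lt_card (Finset.ssubset_univ_iff.mpr hVu)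
  simpa using this

lemma card_pos_of_mem {P : Finset (Finset (Fin n))} (hP : IsPartition P)
    {V : Finset (Fin n)} (hV : V ∈ P) : 1 ≤ V.card :=
  Finset.card_pos.mpr (hP.1 V hV)

lemma partition_one_eq_top {P : Finset (Finset (Fin 1))} (hP : IsPartition P) :
    P = {Finset.univ} := by
  obtain ⟨V, ⟨hVP, h0V⟩, -⟩ := hP.2 0
  have hVu : V = Finset.univ := by
    apply Finset.eq_univ_iff_forall.mpr
    intro x
    have : x = 0 := Subsingleton.elim x 0
    rwa [this]
  exact eq_top_of_univ_mem hP (hVu ▸ hVP)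

lemma IntervalSet_one : IntervalSet 1 = {({Finset.univ} : Finset (Finset (Fin 1)))} := by
  ext P
  rw [Finset.mem_singleton, mem_IntervalSet]
  constructor
  · intro h; exact partition_one_eq_top h.1
  · rintro rfl; exact isInterval_top le_rfl

lemma IntervalSet_zero : IntervalSet 0 = {(∅ : Finset (Finset (Fin 0)))} := by
  ext P
  rw [Finset.mem_singleton, mem_IntervalSet]
  constructor
  · intro h
    apply Finset.eq_empty_iff_forall_notMem.mpr
    intro V hV
    obtain ⟨x, -⟩ := h.1.1 V hV
    exact x.elim0
  · rintro rfl
    exact ⟨⟨fun V hV => absurd hV (Finset.notMem_empty V), fun i => i.elim0⟩,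
      fun i => i.elim0⟩

lemma not_inner_top : ¬ IsInnerBlock ({Finset.univ} : Finset (Finset (Fin n))) Finset.univ := by
  rintro ⟨W, hW, hWne, -⟩
  exact hWne (Finset.mem_singleton.mp hW)

lemma filter_inner_top :
    ({Finset.univ} : Finset (Finset (Fin n))).filter
      (fun V => IsInnerBlock ({Finset.univ} : Finset (Finset (Fin n))) V) = ∅ := by
  rw [Finset.filter_singleton, if_neg not_inner_top]

lemma filter_not_inner_top :
    ({Finset.univ} : Finset (Finset (Fin n))).filter
      (fun V => ¬ IsInnerBlock ({Finset.univ} : Finset (Finset (Fin n))) V) = {Finset.univ} := by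
  rw [Finset.filter_singleton, if_pos not_inner_top]

lemma exists_singleton_of_not_ns {P : Finset (Finset (Fin n))} (hP : P ∈ NCSet n)
    (hns : P ∉ NCnsSet n) : ∃ i : Fin n, {i} ∈ P := by
  rw [mem_NCSet] at hP
  rw [mem_NCnsSet] at hns
  push_neg at hns
  obtain ⟨V, hVP, hV2⟩ := hns hP
  have h1 : V.card = 1 := by
    have := card_pos_of_mem hP.1 hVP
    omega
  obtain ⟨i, rfl⟩ := Finset.card_eq_one.mp h1
  exact ⟨i, hVP⟩

lemma eq_of_sum_eq_top {ι : Type*} [DecidableEq ι] {S : Finset ι} {x : ι} (hx : x ∈ S)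
    {F G : ι → ℂ} (h : ∀ y ∈ S, y ≠ x → F y = G y)
    (hsum : ∑ y ∈ S, F y = ∑ y ∈ S, G y) : F x = G x := by
  rw [← Finset.add_sum_erase S F hx, ← Finset.add_sum_erase S G hx] at hsum
  have he : ∑ y ∈ S.erase x, F y = ∑ y ∈ S.erase x, G y :=
    Finset.sum_congr rfl fun y hy =>
      h y (Finset.mem_of_mem_erase hy) (Finset.ne_of_mem_erase hy)
  rw [he] at hsum
  exact add_right_cancel hsum

end AuxPart

section AuxAlg
variable {B : Type*} [Ring B] [Algebra ℂ B] (φ : B →ₗ[ℂ] ℂ)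

lemma lamChain_nil : LamChain φ [] = 1 := rfl
lemma lamChain_single (g : B) : LamChain φ [g] = g := rfl
lemma lamChain_cons (g h : B) (r : List B) :
    LamChain φ (g :: h :: r)
      = g * LamChain φ (h :: r) - φ (g * LamChain φ (h :: r)) • (1 : B) := rfl
lemma wof_cons (g : B) (r : List B) : Wof φ (g :: r) = g * LamChain φ r := rfl

lemma phi_lamChain (hφ : φ 1 = 1) : ∀ {l : List B}, l ≠ [] → (∀ x ∈ l, φ x = 0) →
    φ (LamChain φ l) = 0
  | [], hl, _ => absurd rfl hl
  | [g], _, hc => hc g (by simp)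
  | g :: h :: r, _, _ => by
      rw [lamChain_cons, map_sub, map_smul, hφ, smul_eq_mul, mul_one, sub_self]

lemma mul_lamChain {g : B} (hg : φ g = 0) (l : List B) :
    g * LamChain φ l = LamChain φ (g :: l) + φ (Wof φ (g :: l)) • (1 : B) := by
  cases l with
  | nil => simp [lamChain_nil, lamChain_single, Wof, hg]
  | cons h r => rw [lamChain_cons, wof_cons, sub_add_cancel]

lemma expansion_step (hφ : φ 1 = 1) (g : B) (r : List B) (hg : φ g = 0)
    (hr : ∀ x ∈ r, φ x = 0)
    (hexp : r.prod
      = ∑ j ∈ Finset.range (r.length + 1), φ (r.drop j).prod • LamChain φ (r.take j)) :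
    φ ((g :: r).prod)
        = ∑ j ∈ Finset.range (r.length + 1),
            φ (Wof φ (g :: r.take j)) * φ ((r.drop j).prod)
      ∧ (g :: r).prod
        = ∑ j ∈ Finset.range (r.length + 1 + 1),
            φ ((g :: r).drop j).prod • LamChain φ ((g :: r).take j) := by
  have e2 : (g :: r).prod
      = (∑ j ∈ Finset.range (r.length + 1),
            φ ((r.drop j).prod) • LamChain φ (g :: r.take j))
        + (∑ j ∈ Finset.range (r.length + 1),
            φ ((r.drop j).prod) * φ (Wof φ (g :: r.take j))) • (1 : B) := by
    calc (g :: r).prod = g * r.prod := List.prod_cons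
      _ = ∑ j ∈ Finset.range (r.length + 1),
            φ ((r.drop j).prod) • (g * LamChain φ (r.take j)) := by
          rw [hexp, Finset.mul_sum]
          exact Finset.sum_congr rfl fun j _ => (mul_smul_comm _ _ _)
      _ = ∑ j ∈ Finset.range (r.length + 1),
            (φ ((r.drop j).prod) • LamChain φ (g :: r.take j)
              + (φ ((r.drop j).prod) * φ (Wof φ (g :: r.take j))) • (1 : B)) := by
          refine Finset.sum_congr rfl fun j _ => ?_
          rw [mul_lamChain φ hg, smul_add, smul_smul]
      _ = _ := by rw [Finset.sum_add_distrib, Finset.sum_smul]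
  have hz : ∀ j ∈ Finset.range (r.length + 1),
      φ (φ ((r.drop j).prod) • LamChain φ (g :: r.take j)) = 0 := by
    intro j _
    rw [map_smul, phi_lamChain φ hφ (by simp)
      (by
        intro x hx
        rcases List.mem_cons.mp hx with h | h
        · exact h ▸ hg
        · exact hr x (List.mem_of_mem_take h)), smul_zero]
  have e3 : φ ((g :: r).prod)
      = ∑ j ∈ Finset.range (r.length + 1),
          φ (Wof φ (g :: r.take j)) * φ ((r.drop j).prod) := by
    rw [e2, map_add, map_sum, Finset.sum_congr rfl hz, Finset.sum_const_zero, zero_add,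
      map_smul, hφ, smul_eq_mul, mul_one]
    exact Finset.sum_congr rfl fun j _ => mul_comm _ _
  refine ⟨e3, ?_⟩
  rw [Finset.sum_range_succ']
  simp only [List.drop_succ_cons, List.take_succ_cons, List.drop_zero, List.take_zero,
    lamChain_nil, smul_eq_mul]
  rw [e3]
  conv_lhs => rw [e2]
  congr 1
  congr 1
  exact Finset.sum_congr rfl fun j _ => mul_comm _ _

lemma lam_expansion (hφ : φ 1 = 1) : ∀ (l : List B), (∀ x ∈ l, φ x = 0) →
    l.prod = ∑ j ∈ Finset.range (l.length + 1), φ (l.drop j).prod • LamChain φ (l.take j)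
  | [], _ => by simp [lamChain_nil, hφ]
  | g :: r, hc => by
    have hg : φ g = 0 := hc g List.mem_cons_self
    have hr : ∀ x ∈ r, φ x = 0 := fun x hx => hc x (List.mem_cons_of_mem g hx)
    simpa using (expansion_step φ hφ g r hg hr (lam_expansion hφ r hr)).2

lemma S_lemma (hφ : φ 1 = 1) {g : B} {r : List B} (hg : φ g = 0) (hr : ∀ x ∈ r, φ x = 0) :
    φ ((g :: r).prod)
      = ∑ j ∈ Finset.range (r.length + 1),
          φ (Wof φ (g :: r.take j)) * φ ((r.drop j).prod) :=
  (expansion_step φ hφ g r hg hr (lam_expansion φ hφ r hr)).1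

end AuxAlg

section AuxSurgery
open Finset

variable {n : ℕ}

lemma sameBlock_def {P : Finset (Finset (Fin n))} {i j : Fin n} :
    sameBlock P i j ↔ ∃ V ∈ P, i ∈ V ∧ j ∈ V := Iff.rfl

def raiseEmb (n m : ℕ) : Fin (n - m) ↪ Fin n :=
  ⟨fun x => ⟨m + x.val, by have := x.isLt; omega⟩,
   fun a b h => by
     apply Fin.ext
     have := congrArg Fin.val h
     simpa using this⟩

lemma raiseEmb_val (m : ℕ) (x : Fin (n - m)) : (raiseEmb n m x).val = m + x.val := rfl

def raiseB (n m : ℕ) (V : Finset (Fin (n - m))) : Finset (Fin n) := V.map (raiseEmb n m)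

def lowerB (n m : ℕ) (W : Finset (Fin n)) : Finset (Fin (n - m)) :=
  Finset.univ.filter fun x => raiseEmb n m x ∈ W

lemma mem_raiseB {m : ℕ} {V : Finset (Fin (n - m))} {i : Fin n} :
    i ∈ raiseB n m V ↔ ∃ x ∈ V, m + x.val = i.val := by
  simp only [raiseB, Finset.mem_map]
  constructor
  · rintro ⟨x, hx, rfl⟩; exact ⟨x, hx, rfl⟩
  · rintro ⟨x, hx, hval⟩; exact ⟨x, hx, Fin.ext hval⟩

lemma le_of_mem_raiseB {m : ℕ} {V : Finset (Fin (n - m))} {i : Fin n}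
    (h : i ∈ raiseB n m V) : m ≤ i.val := by
  obtain ⟨x, -, hval⟩ := mem_raiseB.mp h
  omega

lemma mem_lowerB {m : ℕ} {W : Finset (Fin n)} {x : Fin (n - m)} :
    x ∈ lowerB n m W ↔ raiseEmb n m x ∈ W := by
  simp [lowerB]

lemma raiseB_lowerB {m : ℕ} {W : Finset (Fin n)} (hW : ∀ i ∈ W, m ≤ i.val) :
    raiseB n m (lowerB n m W) = W := by
  ext i
  rw [mem_raiseB]
  constructor
  · rintro ⟨x, hx, hval⟩
    rw [mem_lowerB] at hx
    have : raiseEmb n m x = i := Fin.ext hval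
    rwa [this] at hx
  · intro hi
    have h1 : m ≤ i.val := hW i hi
    have h2 : i.val - m < n - m := by have := i.isLt; omega
    refine ⟨⟨i.val - m, h2⟩, ?_, by simp; omega⟩
    rw [mem_lowerB]
    have : raiseEmb n m ⟨i.val - m, h2⟩ = i := Fin.ext (by simp [raiseEmb_val]; omega)
    rwa [this]

lemma lowerB_raiseB {m : ℕ} (V : Finset (Fin (n - m))) : lowerB n m (raiseB n m V) = V := by
  ext x
  rw [mem_lowerB, raiseB, Finset.mem_map' (raiseEmb n m)]

def initSeg (n m : ℕ) : Finset (Fin n) := Finset.univ.filter fun i => i.val < m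

lemma mem_initSeg {m : ℕ} {i : Fin n} : i ∈ initSeg n m ↔ i.val < m := by simp [initSeg]

lemma card_initSeg {m : ℕ} (h : m ≤ n) : (initSeg n m).card = m := by
  have : initSeg n m = Finset.map ⟨Fin.castLE h, Fin.castLE_injective h⟩ Finset.univ := by
    ext i
    simp only [mem_initSeg, Finset.mem_map, Finset.mem_univ, true_and,
      Function.Embedding.coeFn_mk]
    constructor
    · intro hi; exact ⟨⟨i.val, hi⟩, Fin.ext rfl⟩
    · rintro ⟨x, rfl⟩; exact x.isLt
  rw [this, Finset.card_map, Finset.card_univ, Fintype.card_fin]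

/-- The block of an interval partition containing `0` is an initial segment. -/
lemma block0_eq_initSeg (hn : 1 ≤ n) {P : Finset (Finset (Fin n))}
    (hP : IsIntervalPartition P) {V₀ : Finset (Fin n)} (hV₀ : V₀ ∈ P)
    (h0 : (⟨0, hn⟩ : Fin n) ∈ V₀) : V₀ = initSeg n V₀.card := by
  have hdc : ∀ k ∈ V₀, ∀ j : Fin n, j ≤ k → j ∈ V₀ := by
    intro k hk j hjk
    rcases eq_or_lt_of_le hjk with rfl | hlt
    · exact hk
    by_cases hj0 : j = ⟨0, hn⟩
    · exact hj0 ▸ h0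
    have h0j : (⟨0, hn⟩ : Fin n) < j := by
      refine lt_of_le_of_ne ?_ (Ne.symm hj0)
      exact Fin.mk_le_of_le_val (Nat.zero_le _)
    have hsb : sameBlock P ⟨0, hn⟩ j := hP.2 _ _ _ h0j hlt ⟨V₀, hV₀, h0, hk⟩
    obtain ⟨W, hW, h0W, hjW⟩ := hsb
    have : W = V₀ := block_eq_of_mem hP.1 hW hV₀ h0W h0
    exact this ▸ hjW
  ext i
  rw [mem_initSeg]
  constructor
  · intro hi
    have hsub : initSeg n (i.val + 1) ⊆ V₀ := by
      intro j hj
      rw [mem_initSeg] at hj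
      exact hdc i hi j (by rw [Fin.le_def]; omega)
    have := Finset.card_le_card hsub
    rw [card_initSeg (by omega)] at this
    omega
  · intro hi
    by_contra hiV
    have hsub : V₀ ⊆ initSeg n i.val := by
      intro k hk
      rw [mem_initSeg]
      by_contra hki
      have : i ≤ k := by rw [Fin.le_def]; omega
      exact hiV (hdc k hk i this)
    have := Finset.card_le_card hsub
    rw [card_initSeg (le_of_lt i.isLt)] at this
    omega

lemma block0_filter (hn : 1 ≤ n) {P : Finset (Finset (Fin n))}
    (hP : IsPartition P) {V₀ : Finset (Fin n)} (hV₀ : V₀ ∈ P)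
    (h0 : (⟨0, hn⟩ : Fin n) ∈ V₀) :
    Finset.univ.filter (fun i => sameBlock P ⟨0, hn⟩ i) = V₀ := by
  ext i
  simp only [Finset.mem_filter, Finset.mem_univ, true_and]
  constructor
  · rintro ⟨W, hW, h0W, hiW⟩
    have : W = V₀ := block_eq_of_mem hP hW hV₀ h0W h0
    exact this ▸ hiW
  · intro hi
    exact ⟨V₀, hV₀, h0, hi⟩

noncomputable def mOf (n : ℕ) (hn : 1 ≤ n) (P : Finset (Finset (Fin n))) : ℕ :=
  (Finset.univ.filter fun i : Fin n => sameBlock P ⟨0, hn⟩ i).card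

lemma high_of_ne_initSeg {m : ℕ} {P : Finset (Finset (Fin n))} (hP : IsPartition P)
    (hInit : initSeg n m ∈ P) {W : Finset (Fin n)} (hW : W ∈ P) (hne : W ≠ initSeg n m) :
    ∀ i ∈ W, m ≤ i.val := by
  intro i hi
  by_contra h
  push_neg at h
  exact hne (block_eq_of_mem hP hW hInit hi (mem_initSeg.mpr h))

/-- Packaged facts about the first block of an interval partition. -/
lemma initSeg_mOf (hn : 1 ≤ n) {P : Finset (Finset (Fin n))} (hP : IsIntervalPartition P) :
    initSeg n (mOf n hn P) ∈ P ∧ 1 ≤ mOf n hn P ∧ mOf n hn P ≤ n := by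
  obtain ⟨V₀, ⟨hV₀, h0⟩, -⟩ := hP.1.2 ⟨0, hn⟩
  have hfil := block0_filter hn hP.1 hV₀ h0
  have hm : mOf n hn P = V₀.card := by rw [mOf, hfil]
  have hinit := block0_eq_initSeg hn hP hV₀ h0
  refine ⟨?_, ?_, ?_⟩
  · rw [hm, ← hinit]; exact hV₀
  · rw [hm]; exact Finset.card_pos.mpr ⟨_, h0⟩
  · rw [hm]
    have := Finset.card_le_card (Finset.subset_univ V₀)
    simpa using this

def upP (n m : ℕ) (Q : Finset (Finset (Fin (n - m)))) : Finset (Finset (Fin n)) :=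
  insert (initSeg n m) (Q.image (raiseB n m))

def downP (n m : ℕ) (P : Finset (Finset (Fin n))) : Finset (Finset (Fin (n - m))) :=
  (P.erase (initSeg n m)).image (lowerB n m)

lemma up_isInterval {m : ℕ} (hm1 : 1 ≤ m) (hmn : m ≤ n)
    {Q : Finset (Finset (Fin (n - m)))} (hQ : IsIntervalPartition Q) :
    IsIntervalPartition (upP n m Q) := by
  constructor
  · constructor
    · intro V hV
      rcases Finset.mem_insert.mp hV with rfl | hV'
      · exact ⟨⟨0, lt_of_lt_of_le hm1 hmn⟩, mem_initSeg.mpr hm1⟩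
      · obtain ⟨V', hV'Q, rfl⟩ := Finset.mem_image.mp hV'
        obtain ⟨x, hx⟩ := hQ.1.1 V' hV'Q
        exact ⟨raiseEmb n m x, Finset.mem_map_of_mem _ hx⟩
    · intro i
      by_cases hi : i.val < m
      · refine ⟨initSeg n m, ⟨Finset.mem_insert_self _ _, mem_initSeg.mpr hi⟩, ?_⟩
        rintro V ⟨hV, hiV⟩
        rcases Finset.mem_insert.mp hV with rfl | hV'
        · rfl
        · obtain ⟨V', hV', rfl⟩ := Finset.mem_image.mp hV'
          exact absurd (le_of_mem_raiseB hiV) (by omega)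
      · push_neg at hi
        have hx : i.val - m < n - m := by have := i.isLt; omega
        set x : Fin (n - m) := ⟨i.val - m, hx⟩ with hxdef
        obtain ⟨V', ⟨hV', hxV'⟩, hu⟩ := hQ.1.2 x
        refine ⟨raiseB n m V',
          ⟨Finset.mem_insert_of_mem (Finset.mem_image_of_mem _ hV'),
           mem_raiseB.mpr ⟨x, hxV', by simp [hxdef]; omega⟩⟩, ?_⟩
        rintro W ⟨hW, hiW⟩
        rcases Finset.mem_insert.mp hW with rfl | hW'
        · exact absurd (mem_initSeg.mp hiW) (by omega)
        · obtain ⟨W', hW'Q, rfl⟩ := Finset.mem_image.mp hW'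
          obtain ⟨y, hyW', hyval⟩ := mem_raiseB.mp hiW
          have hyx : y = x := Fin.ext (by simp [hxdef]; omega)
          rw [hu W' ⟨hW'Q, hyx ▸ hyW'⟩]
  · intro i j k hij hjk hik
    obtain ⟨W, hW, hiW, hkW⟩ := hik
    rcases Finset.mem_insert.mp hW with rfl | hW'
    · have hk : k.val < m := mem_initSeg.mp hkW
      have hj : j.val < m := by have := (Fin.lt_def).mp hjk; omega
      exact ⟨initSeg n m, Finset.mem_insert_self _ _, hiW, mem_initSeg.mpr hj⟩
    · obtain ⟨V', hV'Q, rfl⟩ := Finset.mem_image.mp hW'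
      obtain ⟨x, hxV', hxval⟩ := mem_raiseB.mp hiW
      obtain ⟨z, hzV', hzval⟩ := mem_raiseB.mp hkW
      have hjm : m ≤ j.val := by
        have := (Fin.lt_def).mp hij; omega
      have hy : j.val - m < n - m := by have := j.isLt; omega
      set y : Fin (n - m) := ⟨j.val - m, hy⟩ with hydef
      have hxy : x < y := by
        rw [Fin.lt_def]
        have := (Fin.lt_def).mp hij
        simp [hydef]; omega
      have hyz : y < z := by
        rw [Fin.lt_def]
        have := (Fin.lt_def).mp hjk
        simp [hydef]; omega
      have hsb : sameBlock Q x z := ⟨V', hV'Q, hxV', hzV'⟩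
      obtain ⟨U, hU, hxU, hyU⟩ := hQ.2 x y z hxy hyz hsb
      refine ⟨raiseB n m U, Finset.mem_insert_of_mem (Finset.mem_image_of_mem _ hU),
        mem_raiseB.mpr ⟨x, hxU, hxval⟩, mem_raiseB.mpr ⟨y, hyU, by simp [hydef]; omega⟩⟩

lemma down_isInterval {m : ℕ} {P : Finset (Finset (Fin n))}
    (hP : IsIntervalPartition P) (hInit : initSeg n m ∈ P) :
    IsIntervalPartition (downP n m P) := by
  have hhigh : ∀ W ∈ P.erase (initSeg n m), ∀ i ∈ W, m ≤ i.val := by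
    intro W hW
    exact high_of_ne_initSeg hP.1 hInit (Finset.mem_of_mem_erase hW)
      (Finset.ne_of_mem_erase hW)
  constructor
  · constructor
    · intro V hV
      obtain ⟨W, hW, rfl⟩ := Finset.mem_image.mp hV
      obtain ⟨i, hi⟩ := hP.1.1 W (Finset.mem_of_mem_erase hW)
      have h1 : m ≤ i.val := hhigh W hW i hi
      have h2 : i.val - m < n - m := by have := i.isLt; omega
      refine ⟨⟨i.val - m, h2⟩, mem_lowerB.mpr ?_⟩
      have : raiseEmb n m ⟨i.val - m, h2⟩ = i := Fin.ext (by simp [raiseEmb_val]; omega)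
      rwa [this]
    · intro x
      set i : Fin n := raiseEmb n m x with hidef
      obtain ⟨V, ⟨hV, hiV⟩, hu⟩ := hP.1.2 i
      have hiH : m ≤ i.val := by simp [hidef, raiseEmb_val]
      have hVne : V ≠ initSeg n m := by
        intro h
        rw [h, mem_initSeg] at hiV
        omega
      have hVer : V ∈ P.erase (initSeg n m) := Finset.mem_erase.mpr ⟨hVne, hV⟩
      refine ⟨lowerB n m V, ⟨Finset.mem_image_of_mem _ hVer, mem_lowerB.mpr hiV⟩, ?_⟩
      rintro U ⟨hU, hxU⟩
      obtain ⟨W, hW, rfl⟩ := Finset.mem_image.mp hU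
      have hiW : i ∈ W := mem_lowerB.mp hxU
      have : W = V := hu W ⟨Finset.mem_of_mem_erase hW, hiW⟩
      rw [this]
  · intro x y z hxy hyz hxz
    obtain ⟨U, hU, hxU, hzU⟩ := hxz
    obtain ⟨W, hW, rfl⟩ := Finset.mem_image.mp hU
    have hiW : raiseEmb n m x ∈ W := mem_lowerB.mp hxU
    have hkW : raiseEmb n m z ∈ W := mem_lowerB.mp hzU
    have hij : raiseEmb n m x < raiseEmb n m y := by
      rw [Fin.lt_def]; simp only [raiseEmb_val]; exact Nat.add_lt_add_left hxy m
    have hjk : raiseEmb n m y < raiseEmb n m z := by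
      rw [Fin.lt_def]; simp only [raiseEmb_val]; exact Nat.add_lt_add_left hyz m
    obtain ⟨U', hU', hiU', hjU'⟩ :=
      hP.2 _ _ _ hij hjk ⟨W, Finset.mem_of_mem_erase hW, hiW, hkW⟩
    have hU'ne : U' ≠ initSeg n m := by
      intro h
      rw [h, mem_initSeg] at hiU'
      simp [raiseEmb_val] at hiU'
    refine ⟨lowerB n m U',
      Finset.mem_image_of_mem _ (Finset.mem_erase.mpr ⟨hU'ne, hU'⟩),
      mem_lowerB.mpr hiU', mem_lowerB.mpr hjU'⟩

lemma up_down (hn : 1 ≤ n) {m : ℕ} {P : Finset (Finset (Fin n))}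
    (hP : IsIntervalPartition P) (hInit : initSeg n m ∈ P) :
    upP n m (downP n m P) = P := by
  have hhigh : ∀ W ∈ P.erase (initSeg n m), ∀ i ∈ W, m ≤ i.val := by
    intro W hW
    exact high_of_ne_initSeg hP.1 hInit (Finset.mem_of_mem_erase hW)
      (Finset.ne_of_mem_erase hW)
  rw [upP, downP, Finset.image_image]
  have himg : (P.erase (initSeg n m)).image (raiseB n m ∘ lowerB n m)
      = P.erase (initSeg n m) :=
    (Finset.image_congr (fun W hW => raiseB_lowerB (hhigh W hW))).trans Finset.image_id
  rw [himg, Finset.insert_erase hInit]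

lemma initSeg_not_mem_image {m : ℕ} (hm1 : 1 ≤ m) (hmn : m ≤ n)
    (Q : Finset (Finset (Fin (n - m)))) :
    initSeg n m ∉ Q.image (raiseB n m) := by
  intro h
  obtain ⟨V, -, hV⟩ := Finset.mem_image.mp h
  have h0 : (⟨0, lt_of_lt_of_le hm1 hmn⟩ : Fin n) ∈ initSeg n m := mem_initSeg.mpr hm1
  rw [← hV] at h0
  have := le_of_mem_raiseB h0
  have h0' : ((⟨0, lt_of_lt_of_le hm1 hmn⟩ : Fin n) : ℕ) = 0 := rfl
  omega

lemma down_up {m : ℕ} (hm1 : 1 ≤ m) (hmn : m ≤ n) (Q : Finset (Finset (Fin (n - m)))) :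
    downP n m (upP n m Q) = Q := by
  rw [downP, upP, Finset.erase_insert (initSeg_not_mem_image hm1 hmn Q),
    Finset.image_image]
  exact (Finset.image_congr (fun V _ => lowerB_raiseB V)).trans Finset.image_id

lemma mOf_up (hn : 1 ≤ n) {m : ℕ} (hm1 : 1 ≤ m) (hmn : m ≤ n)
    {Q : Finset (Finset (Fin (n - m)))} (hQ : IsIntervalPartition Q) :
    mOf n hn (upP n m Q) = m := by
  have hup := up_isInterval hm1 hmn hQ
  have h0 : (⟨0, hn⟩ : Fin n) ∈ initSeg n m := mem_initSeg.mpr hm1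
  have := block0_filter hn hup.1 (Finset.mem_insert_self _ _) h0
  rw [mOf, this, card_initSeg hmn]

/-- The first-block decomposition of the interval-partition sum. -/
lemma surgery (hn : 1 ≤ n) (G : Finset (Fin n) → ℂ) :
    ∑ P ∈ IntervalSet n, ∏ V ∈ P, G V
      = ∑ m ∈ Finset.Icc 1 n, G (initSeg n m) *
          ∑ Q ∈ IntervalSet (n - m), ∏ V ∈ Q, G (raiseB n m V) := by
  have hrhs : ∀ m ∈ Finset.Icc 1 n,
      G (initSeg n m) * ∑ Q ∈ IntervalSet (n - m), ∏ V ∈ Q, G (raiseB n m V)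
        = ∑ Q ∈ IntervalSet (n - m), G (initSeg n m) * ∏ V ∈ Q, G (raiseB n m V) :=
    fun m _ => Finset.mul_sum _ _ _
  rw [Finset.sum_congr rfl hrhs, ← Finset.sum_sigma (Finset.Icc 1 n)
    (fun m => IntervalSet (n - m))
    (fun x => G (initSeg n x.1) * ∏ V ∈ x.2, G (raiseB n x.1 V))]
  refine Finset.sum_nbij' (fun P => ⟨mOf n hn P, downP n (mOf n hn P) P⟩)
    (fun x => upP n x.1 x.2) ?_ ?_ ?_ ?_ ?_
  · intro P hP
    rw [mem_IntervalSet] at hP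
    obtain ⟨hInit, hm1, hmn⟩ := initSeg_mOf hn hP
    rw [Finset.mem_sigma]
    exact ⟨Finset.mem_Icc.mpr ⟨hm1, hmn⟩, mem_IntervalSet.mpr (down_isInterval hP hInit)⟩
  · rintro ⟨m, Q⟩ hx
    rw [Finset.mem_sigma] at hx
    obtain ⟨hm, hQ⟩ := hx
    rw [Finset.mem_Icc] at hm
    rw [mem_IntervalSet] at hQ ⊢
    exact up_isInterval hm.1 hm.2 hQ
  · intro P hP
    rw [mem_IntervalSet] at hP
    obtain ⟨hInit, hm1, hmn⟩ := initSeg_mOf hn hP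
    exact up_down hn hP hInit
  · rintro ⟨m, Q⟩ hx
    rw [Finset.mem_sigma] at hx
    obtain ⟨hm, hQ⟩ := hx
    rw [Finset.mem_Icc] at hm
    rw [mem_IntervalSet] at hQ
    have h1 : mOf n hn (upP n m Q) = m := mOf_up hn hm.1 hm.2 hQ
    refine Sigma.ext h1 ?_
    show HEq (downP n (mOf n hn (upP n m Q)) (upP n m Q)) Q
    rw [h1]
    exact heq_of_eq (down_up hm.1 hm.2 Q)
  · intro P hP
    rw [mem_IntervalSet] at hP
    obtain ⟨hInit, hm1, hmn⟩ := initSeg_mOf hn hP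
    have hhigh : ∀ W ∈ P.erase (initSeg n (mOf n hn P)), ∀ i ∈ W, mOf n hn P ≤ i.val := by
      intro W hW
      exact high_of_ne_initSeg hP.1 hInit (Finset.mem_of_mem_erase hW)
        (Finset.ne_of_mem_erase hW)
    have hinj : Set.InjOn (lowerB n (mOf n hn P)) (P.erase (initSeg n (mOf n hn P))) := by
      intro W hW W' hW' h
      have := congrArg (raiseB n (mOf n hn P)) h
      rwa [raiseB_lowerB (hhigh W hW), raiseB_lowerB (hhigh W' hW')] at this
    show ∏ V ∈ P, G V = G (initSeg n (mOf n hn P))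
      * ∏ V ∈ downP n (mOf n hn P) P, G (raiseB n (mOf n hn P) V)
    rw [← Finset.mul_prod_erase P G hInit]
    congr 1
    rw [downP, Finset.prod_image hinj]
    exact Finset.prod_congr rfl fun W hW => by rw [raiseB_lowerB (hhigh W hW)]

end AuxSurgery

section AuxMoment
open Finset

variable {B : Type*} [Ring B] [Algebra ℂ B]

lemma sum_Icc_one (n : ℕ) (f : ℕ → ℂ) :
    ∑ m ∈ Finset.Icc 1 n, f m = ∑ j ∈ Finset.range n, f (j + 1) := by
  refine Finset.sum_nbij' (fun m => m - 1) (fun j => j + 1) ?_ ?_ ?_ ?_ ?_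
  · intro a ha; rw [Finset.mem_Icc] at ha; rw [Finset.mem_range]; omega
  · intro a ha; rw [Finset.mem_range] at ha; rw [Finset.mem_Icc]; omega
  · intro a ha; rw [Finset.mem_Icc] at ha; omega
  · intro a ha; omega
  · intro a ha; rw [Finset.mem_Icc] at ha
    have h' : a - 1 + 1 = a := by omega
    rw [h']

lemma raiseEmb_mono {n m : ℕ} (a b : Fin (n - m)) (h : a ≤ b) :
    raiseEmb n m a ≤ raiseEmb n m b := by
  rw [Fin.le_def, raiseEmb_val, raiseEmb_val]
  rw [Fin.le_def] at h
  omega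

lemma blockList_raiseB {n m : ℕ} {A : Type*} (a : Fin n → A) (V : Finset (Fin (n - m))) :
    blockList a (raiseB n m V) = blockList (fun x => a (raiseEmb n m x)) V := by
  unfold blockList raiseB
  rw [sort_map' (raiseEmb n m) raiseEmb_mono, List.map_map]
  rfl

lemma take_finRange {n m : ℕ} (h : m ≤ n) :
    (List.finRange n).take m = (initSeg n m).sort (· ≤ ·) := by
  symm
  have hsor : ((List.finRange n).take m).Pairwise (· ≤ ·) :=
    List.Pairwise.sublist (List.take_sublist _ _) (List.pairwise_le_finRange n)
  have hnd : ((List.finRange n).take m).Nodup :=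
    List.Nodup.sublist (List.take_sublist _ _) (List.nodup_finRange n)
  have hlen : ((List.finRange n).take m).length = m := by
    rw [List.length_take, List.length_finRange]
    omega
  apply sort_eq_of_sorted hsor hnd
  intro x
  rw [mem_initSeg]
  constructor
  · intro hx
    obtain ⟨i, hi, hix⟩ := List.mem_iff_getElem.mp hx
    have hgi : ((List.finRange n).take m)[i] = (List.finRange n)[i]'(by
        rw [List.length_finRange]; have := x.isLt; rw [hlen] at hi; omega) :=
      List.getElem_take
    rw [hgi, List.getElem_finRange] at hix
    have := congrArg Fin.val hix
    simp only [Fin.coe_cast] at this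
    rw [hlen] at hi
    omega
  · intro hx
    refine List.mem_iff_getElem.mpr ⟨x.val, by omega, ?_⟩
    have hgi : ((List.finRange n).take m)[x.val]'(by omega)
        = (List.finRange n)[x.val]'(by rw [List.length_finRange]; exact x.isLt) :=
      List.getElem_take
    rw [hgi, List.getElem_finRange]
    exact Fin.ext rfl

lemma blockList_initSeg {n m : ℕ} {A : Type*} (h : m ≤ n) (a : Fin n → A) :
    blockList a (initSeg n m) = (List.ofFn a).take m := by
  unfold blockList
  rw [← take_finRange h, List.map_take, ← List.ofFn_eq_map]

lemma ofFn_raiseEmb {n m : ℕ} {A : Type*} (a : Fin n → A) :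
    List.ofFn (fun x : Fin (n - m) => a (raiseEmb n m x)) = (List.ofFn a).drop m := by
  apply List.ext_getElem
  · simp
  · intro i h1 h2
    rw [List.getElem_ofFn, List.getElem_drop, List.getElem_ofFn]
    rfl

/-- Moments of centered tuples expand over interval partitions with `φ∘W` weights. -/
lemma moment_interval (φ : B →ₗ[ℂ] ℂ) (hφ : φ 1 = 1) :
    ∀ n : ℕ, ∀ a : Fin n → B, (∀ i, φ (a i) = 0) →
      φ (List.ofFn a).prod = ∑ P ∈ IntervalSet n, ∏ V ∈ P, φ (Wblock φ a V) := by
  intro n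
  induction n using Nat.strong_induction_on with
  | _ n ih =>
    intro a hc
    rcases Nat.eq_zero_or_pos n with rfl | hn
    · rw [IntervalSet_zero]
      simp [hφ]
    rw [surgery hn (fun V => φ (Wblock φ a V))]
    have hinner : ∀ m ∈ Finset.Icc 1 n,
        φ (Wblock φ a (initSeg n m)) *
            ∑ Q ∈ IntervalSet (n - m), ∏ V ∈ Q, φ (Wblock φ a (raiseB n m V))
          = φ (Wof φ ((List.ofFn a).take m)) * φ ((List.ofFn a).drop m).prod := by
      intro m hm
      rw [Finset.mem_Icc] at hm
      have hlt : n - m < n := by omega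
      have hmoment := ih (n - m) hlt (fun x => a (raiseEmb n m x)) (fun x => hc _)
      rw [ofFn_raiseEmb] at hmoment
      congr 1
      · rw [Wblock, blockList_initSeg hm.2]
      · rw [hmoment]
        refine Finset.sum_congr rfl fun Q _ => Finset.prod_congr rfl fun V _ => ?_
        rw [Wblock, Wblock, blockList_raiseB]
    rw [Finset.sum_congr rfl hinner, sum_Icc_one]
    -- now use the algebraic S-lemma
    obtain ⟨k, rfl⟩ : ∃ k, n = k + 1 := ⟨n - 1, by omega⟩
    have hofn : List.ofFn a = a 0 :: List.ofFn (fun i : Fin k => a i.succ) :=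
      List.ofFn_succ
    have hr : ∀ x ∈ List.ofFn (fun i : Fin k => a i.succ), φ x = 0 := by
      intro x hx
      rw [List.mem_ofFn] at hx
      obtain ⟨i, rfl⟩ := hx
      exact hc _
    have hS := S_lemma φ hφ (g := a 0) (r := List.ofFn (fun i : Fin k => a i.succ))
      (hc 0) hr
    rw [← hofn] at hS
    rw [hS]
    refine Finset.sum_congr (by simp) fun j hj => ?_
    have e1 : a 0 :: (List.ofFn fun i : Fin k => a i.succ).take j
        = (List.ofFn a).take (j + 1) := by
      rw [hofn, List.take_succ_cons]
    have e2 : (List.ofFn fun i : Fin k => a i.succ).drop j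
        = (List.ofFn a).drop (j + 1) := by
      rw [hofn, List.drop_succ_cons]
    rw [e1, e2]

lemma boolean_single (φ : B →ₗ[ℂ] ℂ) {Bφ : List B → ℂ} (hBφ : IsBooleanCumulant φ Bφ)
    (x : B) : Bφ [x] = φ x := by
  have h := hBφ 1 le_rfl (fun _ => x)
  rw [IntervalSet_one, Finset.sum_singleton, Finset.prod_singleton, blockList_univ] at h
  have h1 : List.ofFn (fun _ : Fin 1 => x) = [x] := by
    simp [List.ofFn_succ]
  rw [h1] at h
  simp only [List.prod_cons, List.prod_nil, mul_one] at h
  exact h.symm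

/-- On centered tuples, Boolean cumulants are given by `φ ∘ W`. -/
lemma boolean_eq_W (φ : B →ₗ[ℂ] ℂ) (hφ : φ 1 = 1) {Bφ : List B → ℂ}
    (hBφ : IsBooleanCumulant φ Bφ) :
    ∀ n : ℕ, 1 ≤ n → ∀ a : Fin n → B, (∀ i, φ (a i) = 0) →
      Bφ (List.ofFn a) = φ (Wof φ (List.ofFn a)) := by
  intro n
  induction n using Nat.strong_induction_on with
  | _ n ih =>
    intro hn a hc
    have h1 := hBφ n hn a
    have h2 := moment_interval φ hφ n a hc
    have key := eq_of_sum_eq_top (top_mem_IntervalSet hn)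
      (F := fun P => ∏ V ∈ P, Bφ (blockList a V))
      (G := fun P => ∏ V ∈ P, φ (Wblock φ a V)) ?_ (h1.symm.trans h2)
    · simp only [Finset.prod_singleton, Wblock, blockList_univ] at key
      exact key
    · intro P hP hPne
      rw [mem_IntervalSet] at hP
      refine Finset.prod_congr rfl fun V hV => ?_
      have hcard : V.card < n := card_lt_of_ne_top hP.1 hPne hV
      have hpos : 1 ≤ V.card := card_pos_of_mem hP.1 hV
      have hlen : (V.sort (· ≤ ·)).length = V.card := Finset.length_sort _
      have hb := ih (V.sort (· ≤ ·)).length (by omega) (by omega)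
        (fun i => a ((V.sort (· ≤ ·)).get i)) (fun i => hc _)
      rw [← blockList_eq_ofFn] at hb
      rw [hb, Wblock]

end AuxMoment

section AuxMain
open Finset

variable {B : Type*} [Ring B] [Algebra ℂ B]

lemma Wblock_eq_B (φ : B →ₗ[ℂ] ℂ) (hφ : φ 1 = 1) {Bφ : List B → ℂ}
    (hBφ : IsBooleanCumulant φ Bφ) {n : ℕ} (a : Fin n → B) (hc : ∀ i, φ (a i) = 0)
    {V : Finset (Fin n)} (hV : V.Nonempty) :
    φ (Wblock φ a V) = Bφ (blockList a V) := by
  have hlen : 1 ≤ (V.sort (· ≤ ·)).length := by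
    rw [Finset.length_sort]; exact Finset.card_pos.mpr hV
  have hb := boolean_eq_W φ hφ hBφ _ hlen (fun i => a ((V.sort (· ≤ ·)).get i))
    (fun i => hc _)
  rw [← blockList_eq_ofFn] at hb
  rw [Wblock]
  exact hb.symm

lemma B_single_zero (φ : B →ₗ[ℂ] ℂ) {Bφ : List B → ℂ} (hBφ : IsBooleanCumulant φ Bφ)
    {n : ℕ} (a : Fin n → B) (hc : ∀ i, φ (a i) = 0) (i : Fin n) :
    Bφ (blockList a {i}) = 0 := by
  rw [blockList_singleton, boolean_single φ hBφ]
  exact hc i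

lemma RPsi_eq (φ : B →ₗ[ℂ] ℂ) (hφ : φ 1 = 1) (t : ℝ)
    (Ψt : TensorAlgebra ℂ (LinearMap.ker φ) →ₗ[ℂ] ℂ) (hΨt : IsPsiT φ t Ψt)
    (RΨ : List (TensorAlgebra ℂ (LinearMap.ker φ)) → ℂ) (hRΨ : IsFreeCumulant Ψt RΨ)
    (Bφ : List B → ℂ) (hBφ : IsBooleanCumulant φ Bφ) :
    ∀ n : ℕ, 1 ≤ n → ∀ f : Fin n → LinearMap.ker φ,
      RΨ (List.ofFn fun i => TensorAlgebra.ι ℂ (f i))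
        = (t : ℂ) * Bφ (List.ofFn fun i => (f i : B)) := by
  intro n
  induction n using Nat.strong_induction_on with
  | _ n ih =>
    intro hn f
    have hc : ∀ i, φ ((f i : B)) = 0 := fun i => LinearMap.mem_ker.mp (f i).2
    have h1 := hRΨ n hn (fun i => TensorAlgebra.ι ℂ (f i))
    have h2 := hΨt.2 n hn f
    have hstep : ∀ P ∈ NCnsSet n,
        (t : ℂ) ^ P.card * ∏ V ∈ P, φ (Wblock φ (fun i => (f i : B)) V)
          = ∏ V ∈ P, ((t : ℂ) * Bφ (blockList (fun i => (f i : B)) V)) := by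
      intro P hP
      rw [Finset.prod_mul_distrib, Finset.prod_const]
      congr 1
      exact Finset.prod_congr rfl fun V hV =>
        Wblock_eq_B φ hφ hBφ _ hc ((mem_NCnsSet.mp hP).1.1.1 V hV)
    have hsubset : NCnsSet n ⊆ NCSet n :=
      fun P hP => mem_NCSet.mpr (mem_NCnsSet.mp hP).1
    have hzero : ∀ P ∈ NCSet n, P ∉ NCnsSet n →
        ∏ V ∈ P, ((t : ℂ) * Bφ (blockList (fun i => (f i : B)) V)) = 0 := by
      intro P hP hPn
      obtain ⟨i, hiP⟩ := exists_singleton_of_not_ns hP hPn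
      apply Finset.prod_eq_zero hiP
      rw [B_single_zero φ hBφ _ hc i, mul_zero]
    have hsum : ∑ P ∈ NCSet n,
        ∏ V ∈ P, RΨ (blockList (fun i => TensorAlgebra.ι ℂ (f i)) V)
          = ∑ P ∈ NCSet n, ∏ V ∈ P, ((t : ℂ) * Bφ (blockList (fun i => (f i : B)) V)) := by
      rw [← h1, h2, Finset.sum_congr rfl hstep]
      exact Finset.sum_subset hsubset hzero
    have hne : ∀ P ∈ NCSet n, P ≠ {Finset.univ} →
        (fun P => ∏ V ∈ P, RΨ (blockList (fun i => TensorAlgebra.ι ℂ (f i)) V)) P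
          = (fun P => ∏ V ∈ P, ((t : ℂ) * Bφ (blockList (fun i => (f i : B)) V))) P := by
      intro P hP hPne
      refine Finset.prod_congr rfl fun V hV => ?_
      have hPart := (mem_NCSet.mp hP).1
      have hcard := card_lt_of_ne_top hPart hPne hV
      have hpos := card_pos_of_mem hPart hV
      have hlen : (V.sort (· ≤ ·)).length = V.card := Finset.length_sort _
      have hb := ih (V.sort (· ≤ ·)).length (by omega) (by omega)
        (fun i => f ((V.sort (· ≤ ·)).get i))
      rw [blockList_eq_ofFn (fun i => TensorAlgebra.ι ℂ (f i)) V,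
        blockList_eq_ofFn (fun i => ((f i : B))) V]
      exact hb
    have key := eq_of_sum_eq_top (top_mem_NCSet hn) hne hsum
    simp only [Finset.prod_singleton, blockList_univ] at key
    exact key

lemma Rc_eq (φ : B →ₗ[ℂ] ℂ) (hφ : φ 1 = 1) (t : ℝ)
    (Φt Ψt : TensorAlgebra ℂ (LinearMap.ker φ) →ₗ[ℂ] ℂ)
    (hΦt : IsPhiT φ t Φt) (hΨt : IsPsiT φ t Ψt)
    (RΨ : List (TensorAlgebra ℂ (LinearMap.ker φ)) → ℂ) (hRΨ : IsFreeCumulant Ψt RΨ)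
    (Rc : List (TensorAlgebra ℂ (LinearMap.ker φ)) → ℂ) (hRc : IsCFreeCumulant Φt RΨ Rc)
    (Bφ : List B → ℂ) (hBφ : IsBooleanCumulant φ Bφ) :
    ∀ n : ℕ, 1 ≤ n → ∀ f : Fin n → LinearMap.ker φ,
      Rc (List.ofFn fun i => TensorAlgebra.ι ℂ (f i))
        = (1 + (t : ℂ)) * Bφ (List.ofFn fun i => (f i : B)) := by
  intro n
  induction n using Nat.strong_induction_on with
  | _ n ih =>
    intro hn f
    have hc : ∀ i, φ ((f i : B)) = 0 := fun i => LinearMap.mem_ker.mp (f i).2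
    have h1 := hRc n hn (fun i => TensorAlgebra.ι ℂ (f i))
    have h2 := hΦt.2 n hn f
    -- the candidate weight
    set G : Finset (Finset (Fin n)) → ℂ := fun P =>
      (∏ V ∈ P.filter (fun V => IsInnerBlock P V),
          ((t : ℂ) * Bφ (blockList (fun i => (f i : B)) V))) *
      (∏ V ∈ P.filter (fun V => ¬ IsInnerBlock P V),
          ((1 + (t : ℂ)) * Bφ (blockList (fun i => (f i : B)) V))) with hG
    have hstep : ∀ P ∈ NCnsSet n,
        (1 + (t : ℂ)) ^ outerCount P * (t : ℂ) ^ innerCount P *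
            ∏ V ∈ P, φ (Wblock φ (fun i => (f i : B)) V)
          = G P := by
      intro P hP
      have hW : ∏ V ∈ P, φ (Wblock φ (fun i => (f i : B)) V)
          = ∏ V ∈ P, Bφ (blockList (fun i => (f i : B)) V) :=
        Finset.prod_congr rfl fun V hV =>
          Wblock_eq_B φ hφ hBφ _ hc ((mem_NCnsSet.mp hP).1.1.1 V hV)
      rw [hW]
      simp only [hG]
      rw [Finset.prod_mul_distrib, Finset.prod_mul_distrib, Finset.prod_const,
        Finset.prod_const]
      rw [← Finset.prod_filter_mul_prod_filter_not P (fun V => IsInnerBlock P V)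
        (fun V => Bφ (blockList (fun i => (f i : B)) V))]
      rw [innerCount, outerCount]
      ring
    have hsubset : NCnsSet n ⊆ NCSet n :=
      fun P hP => mem_NCSet.mpr (mem_NCnsSet.mp hP).1
    have hzero : ∀ P ∈ NCSet n, P ∉ NCnsSet n → G P = 0 := by
      intro P hP hPn
      obtain ⟨i, hiP⟩ := exists_singleton_of_not_ns hP hPn
      simp only [hG]
      by_cases hinn : IsInnerBlock P {i}
      · rw [Finset.prod_eq_zero (Finset.mem_filter.mpr ⟨hiP, hinn⟩)
          (by rw [B_single_zero φ hBφ _ hc i, mul_zero]), zero_mul]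
      · have hz : ∏ V ∈ P.filter (fun V => ¬ IsInnerBlock P V),
            ((1 + (t : ℂ)) * Bφ (blockList (fun i => (f i : B)) V)) = 0 :=
          Finset.prod_eq_zero (Finset.mem_filter.mpr ⟨hiP, hinn⟩)
            (by rw [B_single_zero φ hBφ _ hc i, mul_zero])
        rw [hz, mul_zero]
    have hsum : ∑ P ∈ NCSet n,
        ((∏ V ∈ P.filter (fun V => IsInnerBlock P V),
            RΨ (blockList (fun i => TensorAlgebra.ι ℂ (f i)) V)) *
         (∏ V ∈ P.filter (fun V => ¬ IsInnerBlock P V),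
            Rc (blockList (fun i => TensorAlgebra.ι ℂ (f i)) V)))
          = ∑ P ∈ NCSet n, G P := by
      rw [← h1, h2, Finset.sum_congr rfl hstep]
      exact Finset.sum_subset hsubset hzero
    have hblock : ∀ (P : Finset (Finset (Fin n))), P ∈ NCSet n → ∀ V ∈ P,
        RΨ (blockList (fun i => TensorAlgebra.ι ℂ (f i)) V)
          = (t : ℂ) * Bφ (blockList (fun i => (f i : B)) V) := by
      intro P hP V hV
      have hPart := (mem_NCSet.mp hP).1
      have hpos := card_pos_of_mem hPart hV
      have hlen : (V.sort (· ≤ ·)).length = V.card := Finset.length_sort _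
      have hb := RPsi_eq φ hφ t Ψt hΨt RΨ hRΨ Bφ hBφ (V.sort (· ≤ ·)).length
        (by omega) (fun i => f ((V.sort (· ≤ ·)).get i))
      rw [blockList_eq_ofFn (fun i => TensorAlgebra.ι ℂ (f i)) V,
        blockList_eq_ofFn (fun i => ((f i : B))) V]
      exact hb
    have hne : ∀ P ∈ NCSet n, P ≠ {Finset.univ} →
        (fun P =>
          (∏ V ∈ P.filter (fun V => IsInnerBlock P V),
              RΨ (blockList (fun i => TensorAlgebra.ι ℂ (f i)) V)) *
          (∏ V ∈ P.filter (fun V => ¬ IsInnerBlock P V),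
              Rc (blockList (fun i => TensorAlgebra.ι ℂ (f i)) V))) P
          = G P := by
      intro P hP hPne
      have hPart := (mem_NCSet.mp hP).1
      simp only [hG]
      congr 1
      · refine Finset.prod_congr rfl fun V hV => ?_
        exact hblock P hP V (Finset.mem_of_mem_filter V hV)
      · refine Finset.prod_congr rfl fun V hV => ?_
        have hVP : V ∈ P := Finset.mem_of_mem_filter V hV
        have hcard := card_lt_of_ne_top hPart hPne hVP
        have hpos := card_pos_of_mem hPart hVP
        have hlen : (V.sort (· ≤ ·)).length = V.card := Finset.length_sort _
        have hb := ih (V.sort (· ≤ ·)).length (by omega) (by omega)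
          (fun i => f ((V.sort (· ≤ ·)).get i))
        rw [blockList_eq_ofFn (fun i => TensorAlgebra.ι ℂ (f i)) V,
          blockList_eq_ofFn (fun i => ((f i : B))) V]
        exact hb
    have key := eq_of_sum_eq_top (top_mem_NCSet hn) hne hsum
    simp only [hG, filter_inner_top, filter_not_inner_top, Finset.prod_empty,
      Finset.prod_singleton, one_mul, blockList_univ] at key
    exact key

end AuxMain


theorem statement11 {B : Type*} [Ring B] [Algebra ℂ B]
    (φ : B →ₗ[ℂ] ℂ) (hφ : φ 1 = 1) (t : ℝ) (ht : 0 ≤ t)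
    (Φt Ψt : TensorAlgebra ℂ (LinearMap.ker φ) →ₗ[ℂ] ℂ)
    (hΦt : IsPhiT φ t Φt) (hΨt : IsPsiT φ t Ψt)
    (RΨ : List (TensorAlgebra ℂ (LinearMap.ker φ)) → ℂ) (hRΨ : IsFreeCumulant Ψt RΨ)
    (Rc : List (TensorAlgebra ℂ (LinearMap.ker φ)) → ℂ) (hRc : IsCFreeCumulant Φt RΨ Rc)
    (Bφ : List B → ℂ) (hBφ : IsBooleanCumulant φ Bφ)
    (n : ℕ) (hn : 1 ≤ n) (f : Fin n → LinearMap.ker φ) :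
    Rc (List.ofFn fun i => TensorAlgebra.ι ℂ (f i))
      = (1 + (t : ℂ)) * Bφ (List.ofFn fun i => (f i : B)) := Rc_eq φ hφ t Φt Ψt hΦt hΨt RΨ hRΨ Rc hRc Bφ hBφ n hn f
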